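/- Let ρ_1 : W_> → End(V_1) and ρ_2 : W_> → End(V_2) be representations of W_>, and ρ = ρ_1 ⊗ 1 + 1 ⊗ ρ_2 on V_1 ⊗ V_2. Let f_{1,1},…,f_{1,r} ∈ V_1 and f_{2,1},…,f_{2,r} ∈ V_2, each family linearly independent. If ρ(L_k)(Σ_j f_{1,j} ⊗ f_{2,j}) = 0 for all k ≥ -1, then ρ_i(L_k)(f_{i,j}) = 0 for all i ∈ {1,2}, all j, and all k ≥ -1. -/

import Mathlib

/-- `L : ℤ → W` (restricted to indices `k ≥ -1`) is a basis of the complex Lie algebra `W`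
realizing it as `W_>`, the Lie algebra with basis `{L_k}_{k ≥ -1}` and bracket
`[L_i, L_j] = (i - j) L_{i+j}`. -/
def IsWittBasis {W : Type*} [LieRing W] [LieAlgebra ℂ W] (L : ℤ → W) : Prop :=
  (∀ i j : ℤ, -1 ≤ i → -1 ≤ j → ⁅L i, L j⁆ = ((i - j : ℤ) : ℂ) • L (i + j)) ∧
  LinearIndependent ℂ (fun k : {k : ℤ // -1 ≤ k} => L k.1) ∧
  Submodule.span ℂ (Set.range fun k : {k : ℤ // -1 ≤ k} => L k.1) = ⊤

attribute [local instance 100] LieRing.ofAssociativeRing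

/-! Projecting the first tensor factor onto `V₁ ⧸ span f₁` kills the `ρ₂`-part of
`ρ(L_k) (∑ⱼ f₁ⱼ ⊗ f₂ⱼ) = 0`, and linear independence of the `f₂ⱼ` then puts `ρ₁(L_k) f₁ⱼ` in
`span f₁`. So `ρ₁` restricts to the finite-dimensional space `span f₁`, where every such
action vanishes: the images of the `L_k` are eigenvectors of `ad L₀` with the distinct
eigenvalues `-k`, so only finitely many are nonzero, and `[L₋₁, L_{k+1}] = -(k+2) L_k`
propagates vanishing down from the largest one. The second factor is symmetric. -/

section TensorProduct

variable {K ι M N : Type*} [Field K] [Fintype ι] [AddCommGroup M] [Module K M]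
  [AddCommGroup N] [Module K N]

theorem eq_zero_of_sum_tmul_eq_zero {w : ι → N} (hw : LinearIndependent K w) {m : ι → M}
    (h : ∑ i, m i ⊗ₜ[K] w i = 0) (i : ι) : m i = 0 := by
  classical
  set p := Submodule.span K (Set.range w)
  set b := Module.Basis.span hw
  have hlift : LinearMap.lTensor M p.subtype (∑ j, m j ⊗ₜ[K] b j) = ∑ j, m j ⊗ₜ[K] w j := by
    simp [b, Module.Basis.span_apply]
  have hb : ∑ j, m j ⊗ₜ[K] b j = 0 :=
    Module.Flat.lTensor_preserves_injective_linearMap _ p.injective_subtype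
      (by rw [hlift, h, map_zero])
  have hcoord := congrArg (fun x => TensorProduct.equivFinsuppOfBasisRight b x i) hb
  simpa [TensorProduct.equivFinsuppOfBasisRight_apply_tmul_apply, Finsupp.single_apply]
    using hcoord

theorem span_le_comap_of_rTensor_add_lTensor_eq_zero (T : Module.End K M)
    (S : Module.End K N) {f₁ : ι → M} {f₂ : ι → N} (hf₂ : LinearIndependent K f₂)
    (h : (LinearMap.rTensor N T + LinearMap.lTensor M S) (∑ j, f₁ j ⊗ₜ[K] f₂ j) = 0) :
    Submodule.span K (Set.range f₁) ≤ (Submodule.span K (Set.range f₁)).comap T := by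
  refine Submodule.span_le.2 (Set.range_subset_iff.2 fun i => ?_)
  set q := (Submodule.span K (Set.range f₁)).mkQ
  have hq : ∀ j, q (f₁ j) = 0 := fun j =>
    (Submodule.Quotient.mk_eq_zero _).2 (Submodule.subset_span ⟨j, rfl⟩)
  have hproj : ∑ j, q (T (f₁ j)) ⊗ₜ[K] f₂ j = 0 := by
    simpa [map_sum, hq, Finset.sum_add_distrib] using congrArg (LinearMap.rTensor N q) h
  exact Submodule.mem_comap.2
    ((Submodule.Quotient.mk_eq_zero _).1 (eq_zero_of_sum_tmul_eq_zero hf₂ hproj i))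

theorem comm_rTensor_add_lTensor (T : Module.End K M) (S : Module.End K N) (x : TensorProduct K M N) :
    TensorProduct.comm K M N ((LinearMap.rTensor N T + LinearMap.lTensor M S) x) =
      (LinearMap.rTensor M S + LinearMap.lTensor N T) (TensorProduct.comm K M N x) := by
  induction x using TensorProduct.induction_on with
  | zero => simp
  | tmul a b => simp [add_comm]
  | add x y hx hy => simp only [map_add] at hx hy ⊢; rw [hx, hy]

end TensorProduct

section WittFamily

variable (K : Type*) {g : Type*} [Field K] [LieRing g] [LieAlgebra K g]

def IsWittFamily (A : ℤ → g) : Prop :=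
  ∀ i j : ℤ, -1 ≤ i → -1 ≤ j → ⁅A i, A j⁆ = ((i - j : ℤ) : K) • A (i + j)

variable {K}

namespace IsWittFamily

lemma comp_lieHom {h : Type*} [LieRing h] [LieAlgebra K h] {A : ℤ → g}
    (hA : IsWittFamily K A) (f : g →ₗ⁅K⁆ h) : IsWittFamily K (f ∘ A) := fun i j hi hj => by
  simp only [Function.comp_apply, ← LieHom.map_lie, hA i j hi hj, map_smul]

lemma restrict {V : Type*} [AddCommGroup V] [Module K V] {A : ℤ → Module.End K V}
    (hA : IsWittFamily K A) {E : Submodule K V} (hE : ∀ k, -1 ≤ k → E ≤ E.comap (A k)) :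
    IsWittFamily K fun k => if hk : -1 ≤ k then (A k).restrict (hE k hk) else 0 := by
  intro i j hi hj
  rcases eq_or_ne i j with rfl | hij
  · simp
  ext x
  have hbr := congrArg (· x.1) (hA i j hi hj)
  simpa [hi, hj, show -1 ≤ i + j by omega, Ring.lie_def, LinearMap.restrict_apply] using hbr

variable [CharZero K]

lemma eq_zero_of_succ_eq_zero {A : ℤ → g} (hA : IsWittFamily K A) {k : ℤ} (hk : -1 ≤ k)
    (hsucc : A (k + 1) = 0) : A k = 0 := by
  have h := hA (-1) (k + 1) le_rfl (by omega)
  rw [hsucc, lie_zero, show -1 + (k + 1) = k by ring, eq_comm, smul_eq_zero] at h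
  exact h.resolve_left (by rw [Int.cast_eq_zero]; omega)

lemma finite_setOf_ne_zero [FiniteDimensional K g] {A : ℤ → g} (hA : IsWittFamily K A) :
    {k : ℤ | -1 ≤ k ∧ A k ≠ 0}.Finite := by
  set S := {k : ℤ | -1 ≤ k ∧ A k ≠ 0}
  have hli : LinearIndependent K (fun k : S => A k) := by
    refine Module.End.eigenvectors_linearIndependent' (LieAlgebra.ad K g (A 0))
      (fun k : S => ((-k : ℤ) : K)) (fun a b hab => Subtype.ext (by simpa using hab)) _
      fun k => ⟨Module.End.mem_eigenspace_iff.2 ?_, k.2.2⟩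
    rw [LieAlgebra.ad_apply, hA 0 k (by norm_num) k.2.1, zero_add, zero_sub]
  have := hli.finite
  exact S.toFinite

theorem eq_zero [FiniteDimensional K g] {A : ℤ → g} (hA : IsWittFamily K A) {k : ℤ}
    (hk : -1 ≤ k) : A k = 0 := by
  by_contra hne
  obtain ⟨m, ⟨hm, hAm⟩, hmax⟩ :=
    Set.exists_max_image _ id hA.finite_setOf_ne_zero ⟨k, hk, hne⟩
  refine hAm (hA.eq_zero_of_succ_eq_zero hm ?_)
  by_contra hsucc
  exact absurd (hmax (m + 1) ⟨by omega, hsucc⟩) (by simp)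

variable {M N : Type*} [AddCommGroup M] [Module K M] [AddCommGroup N] [Module K N]
  {A : ℤ → Module.End K M}

theorem apply_eq_zero_of_mem (hA : IsWittFamily K A) {E : Submodule K M}
    [FiniteDimensional K E] (hE : ∀ k, -1 ≤ k → E ≤ E.comap (A k)) {k : ℤ} (hk : -1 ≤ k)
    {x : M} (hx : x ∈ E) : A k x = 0 := by
  have h := congrArg (fun B : Module.End K E => (B ⟨x, hx⟩ : M)) ((hA.restrict hE).eq_zero hk)
  simpa [hk, LinearMap.restrict_apply] using h

theorem apply_eq_zero_of_rTensor_add_lTensor_eq_zero (hA : IsWittFamily K A)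
    (S : ℤ → Module.End K N) {ι : Type*} [Fintype ι] {f₁ : ι → M} {f₂ : ι → N}
    (hf₂ : LinearIndependent K f₂)
    (h : ∀ k, -1 ≤ k →
      (LinearMap.rTensor N (A k) + LinearMap.lTensor M (S k)) (∑ j, f₁ j ⊗ₜ[K] f₂ j) = 0)
    {k : ℤ} (hk : -1 ≤ k) (j : ι) : A k (f₁ j) = 0 :=
  have := FiniteDimensional.span_of_finite K (Set.finite_range f₁)
  hA.apply_eq_zero_of_mem
    (fun k hk => span_le_comap_of_rTensor_add_lTensor_eq_zero _ _ hf₂ (h k hk)) hk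
    (Submodule.subset_span ⟨j, rfl⟩)

end IsWittFamily

end WittFamily

/-- Hard direction of Theorem 2.10: if the product representation
`ρ = ρ_1 ⊗ 1 + 1 ⊗ ρ_2` of `W_>` kills `Σ_j f_{1,j} ⊗ f_{2,j}` for all `k ≥ -1`,
with each family `f_{i,·}` linearly independent, then `ρ_i(L_k)(f_{i,j}) = 0`
for all `i ∈ {1,2}`, all `j` and all `k ≥ -1`. -/
theorem product_rep_solution_factorizes {W V1 V2 : Type*} [LieRing W] [LieAlgebra ℂ W]
    [AddCommGroup V1] [Module ℂ V1] [AddCommGroup V2] [Module ℂ V2]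
    (L : ℤ → W) (hW : IsWittBasis L)
    (ρ1 : W →ₗ⁅ℂ⁆ Module.End ℂ V1) (ρ2 : W →ₗ⁅ℂ⁆ Module.End ℂ V2)
    (r : ℕ) (f1 : Fin r → V1) (f2 : Fin r → V2)
    (h1 : LinearIndependent ℂ f1) (h2 : LinearIndependent ℂ f2)
    (hz : ∀ k : ℤ, -1 ≤ k →
      (LinearMap.rTensor V2 (ρ1 (L k)) + LinearMap.lTensor V1 (ρ2 (L k)))
        (∑ j : Fin r, f1 j ⊗ₜ[ℂ] f2 j) = 0) :
    ∀ k : ℤ, -1 ≤ k → ∀ j : Fin r, ρ1 (L k) (f1 j) = 0 ∧ ρ2 (L k) (f2 j) = 0 := by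
  have hL : IsWittFamily ℂ L := hW.1
  have hz' : ∀ k : ℤ, -1 ≤ k →
      (LinearMap.rTensor V1 (ρ2 (L k)) + LinearMap.lTensor V2 (ρ1 (L k)))
        (∑ j : Fin r, f2 j ⊗ₜ[ℂ] f1 j) = 0 := fun k hk => by
    have h := congrArg (TensorProduct.comm ℂ V1 V2) (hz k hk)
    rw [comm_rTensor_add_lTensor, map_zero] at h
    simpa only [map_sum, TensorProduct.comm_tmul] using h
  intro k hk j
  exact ⟨(hL.comp_lieHom ρ1).apply_eq_zero_of_rTensor_add_lTensor_eq_zero _ h2 hz hk j,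
    (hL.comp_lieHom ρ2).apply_eq_zero_of_rTensor_add_lTensor_eq_zero _ h1 hz' hk j⟩
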